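/- Let Φ denote the standard Normal cdf and y*(u) = -√(-2 log u). Then Φ^{-1}(u) = y*(u)(1 + O(log|log u|/log u)) as u → 0⁺, and moreover y*(g(x)) = x(1 + O(log|x|/x²)) as x → -∞, where g = Φ. -/

import Mathlib

open Filter Topology Asymptotics Real MeasureTheory

/-!
For `x ≤ -1`, integrating `exp (-t²/2) ≤ (t / x) exp (-t²/2)` over `t ≤ x`, and bounding the
integrand below by `exp (-x²/2 - 3/2)` on `[x + 1/x, x]`, gives
`x²/2 + log (-x) ≤ -log Φ(x) ≤ x²/2 + log (-x) + 4`.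
Taking square roots, `√(-2 log Φ(x)) = -x + O(log (-x) / (-x))`, the second estimate.
For the first, put `x = Φ⁻¹(u)`: then `Q = -log u` lies in `[x²/2, x²]`, which makes
`log (-x) / (-x)` at most `√(2Q) log Q / Q`.
-/

noncomputable def stdNormalCDF (x : ℝ) : ℝ :=
  ∫ t in Set.Iic x, exp (-t ^ 2 / 2) / √(2 * π)

lemma integrable_exp_neg_sq_div_two : Integrable fun t : ℝ => exp (-t ^ 2 / 2) := by
  simpa [neg_div, div_eq_inv_mul] using integrable_exp_neg_mul_sq (b := 1 / 2) (by norm_num)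

lemma integrable_neg_mul_exp_neg_sq_div_two : Integrable fun t : ℝ => -t * exp (-t ^ 2 / 2) := by
  simpa [neg_div, div_eq_inv_mul] using
    (integrable_mul_exp_neg_mul_sq (b := 1 / 2) (by norm_num)).neg

lemma integral_Iic_neg_mul_exp_neg_sq_div_two (x : ℝ) :
    ∫ t in Set.Iic x, -t * exp (-t ^ 2 / 2) = exp (-x ^ 2 / 2) := by
  have hderiv : ∀ t ∈ Set.Iic x,
      HasDerivAt (fun s : ℝ => exp (-s ^ 2 / 2)) (-t * exp (-t ^ 2 / 2)) t := by
    intro t _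
    have h : HasDerivAt (fun s : ℝ => -s ^ 2 / 2) (-t) t :=
      (((hasDerivAt_pow 2 t).neg).div_const 2).congr_deriv (by push_cast; ring)
    simpa [mul_comm] using h.exp
  have hlim : Tendsto (fun s : ℝ => exp (-s ^ 2 / 2)) atBot (𝓝 0) := by
    refine tendsto_exp_atBot.comp ?_
    have hsq : Tendsto (fun s : ℝ => s ^ 2) atBot atTop :=
      ((tendsto_pow_atTop two_ne_zero).comp tendsto_neg_atBot_atTop).congr fun s => by simp
    exact (tendsto_neg_atTop_atBot.comp (hsq.atTop_div_const two_pos)).congr fun s => by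
      simp [neg_div]
  simpa using integral_Iic_of_hasDerivAt_of_tendsto' hderiv
    integrable_neg_mul_exp_neg_sq_div_two.integrableOn hlim

lemma integral_Iic_exp_neg_sq_div_two_le {x : ℝ} (hx : x < 0) :
    ∫ t in Set.Iic x, exp (-t ^ 2 / 2) ≤ exp (-x ^ 2 / 2) / -x := by
  have hx0 : 0 < -x := neg_pos.2 hx
  calc ∫ t in Set.Iic x, exp (-t ^ 2 / 2)
      ≤ ∫ t in Set.Iic x, (-x)⁻¹ * (-t * exp (-t ^ 2 / 2)) := by
        refine setIntegral_mono_on integrable_exp_neg_sq_div_two.integrableOn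
          (integrable_neg_mul_exp_neg_sq_div_two.integrableOn.const_mul _) measurableSet_Iic ?_
        intro t (ht : t ≤ x)
        rw [← mul_assoc, inv_mul_eq_div]
        exact le_mul_of_one_le_left (exp_pos _).le ((one_le_div hx0).2 (by linarith))
    _ = exp (-x ^ 2 / 2) / -x := by
        rw [integral_const_mul, integral_Iic_neg_mul_exp_neg_sq_div_two, inv_mul_eq_div]

lemma exp_sub_div_le_integral_Iic_exp_neg_sq_div_two {x : ℝ} (hx : x ≤ -1) :
    exp (-x ^ 2 / 2 - 3 / 2) / -x ≤ ∫ t in Set.Iic x, exp (-t ^ 2 / 2) := by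
  have hx0 : x < 0 := by linarith
  have hinv : -1 ≤ x⁻¹ := by
    rw [le_inv_of_neg (by norm_num) hx0]; simpa using hx
  have hlen : x - (x + x⁻¹) = -x⁻¹ := by ring
  -- on `[x + 1/x, x]` we have `t² ≤ (x + 1/x)² = x² + 2 + 1/x² ≤ x² + 3`
  have hbound :
      ∀ t ∈ Set.Ioc (x + x⁻¹) x, exp (-x ^ 2 / 2 - 3 / 2) ≤ exp (-t ^ 2 / 2) := by
    rintro t ⟨ht1, ht2⟩
    have hxx : x * x⁻¹ = 1 := mul_inv_cancel₀ hx0.ne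
    have hinv_neg : x⁻¹ < 0 := inv_lt_zero.2 hx0
    exact exp_le_exp.2 (by nlinarith)
  calc exp (-x ^ 2 / 2 - 3 / 2) / -x
      = exp (-x ^ 2 / 2 - 3 / 2) * volume.real (Set.Ioc (x + x⁻¹) x) := by
        rw [measureReal_def, volume_Ioc, hlen, ENNReal.toReal_ofReal (by simpa using hx0.le)]
        ring
    _ ≤ ∫ t in Set.Ioc (x + x⁻¹) x, exp (-t ^ 2 / 2) :=
        setIntegral_ge_of_const_le_real measurableSet_Ioc measure_Ioc_lt_top.ne hbound
          integrable_exp_neg_sq_div_two.integrableOn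
    _ ≤ ∫ t in Set.Iic x, exp (-t ^ 2 / 2) :=
        setIntegral_mono_set integrable_exp_neg_sq_div_two.integrableOn
          (.of_forall fun _ => (exp_pos _).le) (Set.Ioc_subset_Iic_self).eventuallyLE

lemma stdNormalCDF_eq_integral_div (x : ℝ) :
    stdNormalCDF x = (∫ t in Set.Iic x, exp (-t ^ 2 / 2)) / √(2 * π) :=
  integral_div _ _

lemma stdNormalCDF_mono : Monotone stdNormalCDF := fun a b hab =>
  setIntegral_mono_set (integrable_exp_neg_sq_div_two.div_const _).integrableOn
    (.of_forall fun _ => by positivity) (Set.Iic_subset_Iic.2 hab).eventuallyLE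

lemma stdNormalCDF_le_one (x : ℝ) : stdNormalCDF x ≤ 1 := by
  have hint := integrable_exp_neg_sq_div_two.div_const √(2 * π)
  calc stdNormalCDF x ≤ ∫ t, exp (-t ^ 2 / 2) / √(2 * π) :=
        setIntegral_le_integral hint (.of_forall fun _ => by positivity)
    _ = 1 := by
        have hπ : 0 < √(2 * π) := by positivity
        have hg : ∫ t, exp (-t ^ 2 / 2) = √(2 * π) := by
          simpa [neg_div, div_eq_inv_mul, mul_comm] using integral_gaussian (1 / 2)
        rw [integral_div, hg, div_self hπ.ne']

lemma one_le_sqrt_two_mul_pi : 1 ≤ √(2 * π) :=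
  one_le_sqrt.2 (by linarith [pi_gt_three])

lemma stdNormalCDF_le {x : ℝ} (hx : x < 0) : stdNormalCDF x ≤ exp (-x ^ 2 / 2) / -x := by
  rw [stdNormalCDF_eq_integral_div]
  exact (div_le_self (integral_nonneg fun _ => (exp_pos _).le) one_le_sqrt_two_mul_pi).trans
    (integral_Iic_exp_neg_sq_div_two_le hx)

lemma exp_sub_four_div_le_stdNormalCDF {x : ℝ} (hx : x ≤ -1) :
    exp (-x ^ 2 / 2 - 4) / -x ≤ stdNormalCDF x := by
  have hπ : √(2 * π) ≤ exp (5 / 2) := by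
    calc √(2 * π) ≤ 3 := sqrt_le_iff.2 ⟨by norm_num, by linarith [pi_lt_d2]⟩
      _ ≤ exp (5 / 2) := by linarith [add_one_le_exp (5 / 2 : ℝ)]
  have hπ0 : 0 < √(2 * π) := by positivity
  calc exp (-x ^ 2 / 2 - 4) / -x
      = exp (-x ^ 2 / 2 - 3 / 2) / -x / exp (5 / 2) := by
        rw [div_right_comm, ← exp_sub]
        ring_nf
    _ ≤ exp (-x ^ 2 / 2 - 3 / 2) / -x / √(2 * π) :=
        div_le_div_of_nonneg_left (div_nonneg (exp_pos _).le (by linarith)) hπ0 hπ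
    _ ≤ stdNormalCDF x := by
        rw [stdNormalCDF_eq_integral_div]
        exact div_le_div_of_nonneg_right
          (exp_sub_div_le_integral_Iic_exp_neg_sq_div_two hx) hπ0.le

lemma neg_log_stdNormalCDF_mem_Icc {x : ℝ} (hx : x ≤ -1) :
    -log (stdNormalCDF x) ∈ Set.Icc (x ^ 2 / 2 + log (-x)) (x ^ 2 / 2 + log (-x) + 4) := by
  have hx0 : 0 < -x := by linarith
  have hlog : ∀ c, log (exp (-x ^ 2 / 2 - c) / -x) = -(x ^ 2 / 2 + log (-x) + c) := fun c => by
    rw [log_div (exp_pos _).ne' hx0.ne', log_exp]; ring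
  have hlower := exp_sub_four_div_le_stdNormalCDF hx
  have hpos : 0 < stdNormalCDF x := lt_of_lt_of_le (by positivity) hlower
  have hupper : stdNormalCDF x ≤ exp (-x ^ 2 / 2 - 0) / -x := by
    simpa using stdNormalCDF_le (by linarith : x < 0)
  constructor
  · have := log_le_log hpos hupper
    rw [hlog] at this
    linarith
  · have := log_le_log (div_pos (exp_pos _) hx0) hlower
    rw [hlog] at this
    linarith

lemma sqrt_le_add_div {a b s : ℝ} (ha : 0 < a) (hb : 0 ≤ b) (hs : s ≤ a ^ 2 + 2 * b) :
    √s ≤ a + b / a := by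
  refine sqrt_le_iff.2 ⟨add_nonneg ha.le (div_nonneg hb ha.le), ?_⟩
  have : a * (b / a) = b := mul_div_cancel₀ b ha.ne'
  nlinarith [sq_nonneg (b / a)]

lemma log_div_le_sqrt_two_mul_mul_log_div {a Q : ℝ} (ha : 2 ≤ a) (hlo : a ^ 2 ≤ 2 * Q)
    (hhi : Q ≤ a ^ 2) : log a / a ≤ √(2 * Q) * (log Q / Q) := by
  have ha0 : 0 < a := by linarith
  have hQ : a ≤ Q := by nlinarith
  have hsqrt : a ≤ √(2 * Q) := le_sqrt_of_sq_le hlo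
  have hlog : log a ≤ log Q := log_le_log ha0 hQ
  have hloga : 0 ≤ log a := log_nonneg (by linarith)
  calc log a / a = a * log a / a ^ 2 := by field_simp
    _ ≤ √(2 * Q) * log Q / Q :=
        div_le_div₀ (mul_nonneg (sqrt_nonneg _) (hloga.trans hlog))
          (mul_le_mul hsqrt hlog hloga (sqrt_nonneg _)) (by linarith) hhi
    _ = √(2 * Q) * (log Q / Q) := mul_div_assoc _ _ _

lemma neg_sqrt_neg_two_mul_log_mul_log_abs_log_div_log (u : ℝ) :
    -√(-2 * log u) * (log |log u| / log u) = √(2 * -log u) * (log (-log u) / -log u) := by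
  rw [log_abs, log_neg_eq_log]
  ring_nf

lemma four_le_log_neg {x : ℝ} (hx : x ≤ -exp 4) : 4 ≤ log (-x) := by
  rw [← log_exp 4]
  exact log_le_log (exp_pos 4) (by linarith)

lemma norm_mul_log_abs_div_sq {x : ℝ} (hx : x ≤ -1) :
    ‖x * (log |x| / x ^ 2)‖ = log (-x) / -x := by
  have hx0 : x < 0 := by linarith
  have hlog : 0 ≤ log (-x) := log_nonneg (by linarith)
  rw [norm_eq_abs, abs_of_neg hx0,
    show x * (log (-x) / x ^ 2) = -(log (-x) / -x) by field_simp, abs_neg,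
    abs_of_nonneg (div_nonneg hlog (by linarith))]

lemma abs_sqrt_neg_two_mul_log_stdNormalCDF_add_le {x : ℝ} (hx : x ≤ -exp 4) :
    |√(-2 * log (stdNormalCDF x)) + x| ≤ 2 * (log (-x) / -x) := by
  have hL := four_le_log_neg hx
  have hx0 : 0 < -x := by linarith [exp_pos 4]
  obtain ⟨hlo, hhi⟩ := neg_log_stdNormalCDF_mem_Icc (x := x) (by linarith [add_one_le_exp 4])
  have hge : -x ≤ √(-2 * log (stdNormalCDF x)) := le_sqrt_of_sq_le (by nlinarith)
  have hle : √(-2 * log (stdNormalCDF x)) ≤ -x + 2 * log (-x) / -x :=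
    sqrt_le_add_div hx0 (by linarith) (by nlinarith)
  rw [abs_of_nonneg (by linarith), mul_div_assoc']
  linarith

lemma log_neg_div_neg_le_of_le_neg_exp_four {x : ℝ} (hx : x ≤ -exp 4) :
    log (-x) / -x ≤ √(2 * -log (stdNormalCDF x)) *
      (log (-log (stdNormalCDF x)) / -log (stdNormalCDF x)) := by
  have hL := four_le_log_neg hx
  have h5 : 5 ≤ -x := by linarith [add_one_le_exp 4]
  have hlog : log (-x) ≤ -x - 1 := by linarith [log_le_sub_one_of_pos (by linarith : 0 < -x)]
  obtain ⟨hlo, hhi⟩ := neg_log_stdNormalCDF_mem_Icc (x := x) (by linarith)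
  exact log_div_le_sqrt_two_mul_mul_log_div (by linarith) (by nlinarith) (by nlinarith)

/-- The dominant-term approximation y*(u) = -√(-2 log u) to the standard
Normal lower quantile and its accuracy. -/
theorem normal_quantile_dominant_term
    (Φ PhiInv : ℝ → ℝ)
    (hΦ : ∀ x, Φ x = ∫ t in Set.Iic x, Real.exp (-t ^ 2 / 2) / Real.sqrt (2 * Real.pi))
    (hinv : ∀ u ∈ Set.Ioo (0:ℝ) 1, Φ (PhiInv u) = u) :
    ((fun u => PhiInv u - (-Real.sqrt (-2 * Real.log u))) =O[𝓝[>] (0:ℝ)]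
        (fun u => -Real.sqrt (-2 * Real.log u) * (Real.log |Real.log u| / Real.log u)) ∧
     (fun x => -Real.sqrt (-2 * Real.log (Φ x)) - x) =O[atBot]
        (fun x => x * (Real.log |x| / x ^ 2))) := by
  obtain rfl : Φ = stdNormalCDF := funext hΦ
  refine ⟨IsBigO.of_bound 2 ?_, IsBigO.of_bound 2 ?_⟩
  · have hM : 0 < stdNormalCDF (-exp 4) :=
      (div_pos (exp_pos _) (by linarith [exp_pos 4])).trans_le
        (exp_sub_four_div_le_stdNormalCDF (by linarith [add_one_le_exp 4]))
    filter_upwards [Ioo_mem_nhdsGT hM] with u ⟨hu0, hu⟩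
    have hx := hinv u ⟨hu0, hu.trans_le (stdNormalCDF_le_one _)⟩
    generalize PhiInv u = x at hx ⊢
    subst hx
    have hxM : x ≤ -exp 4 := by
      by_contra! h
      exact hu.not_ge (stdNormalCDF_mono h.le)
    rw [neg_sqrt_neg_two_mul_log_mul_log_abs_log_div_log, norm_eq_abs, norm_eq_abs,
      sub_neg_eq_add, add_comm]
    have hdiff := abs_sqrt_neg_two_mul_log_stdNormalCDF_add_le hxM
    have hscale := log_neg_div_neg_le_of_le_neg_exp_four hxM
    linarith [le_abs_self (√(2 * -log (stdNormalCDF x)) *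
      (log (-log (stdNormalCDF x)) / -log (stdNormalCDF x)))]
  · filter_upwards [eventually_le_atBot (-exp 4)] with x hx
    rw [norm_mul_log_abs_div_sq (by linarith [add_one_le_exp 4]), ← norm_neg, neg_sub',
      sub_neg_eq_add, neg_neg, norm_eq_abs]
    exact abs_sqrt_neg_two_mul_log_stdNormalCDF_add_le hx
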